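/- For l ∈ ℕ let W_l H ⊆ H denote the ℂ-linear span of all products x_{a_1}⋯x_{a_p} · y_{b_1}⋯y_{b_q} · w with p + q ≤ l, indices a_r, b_s ∈ {1,…,n}, and w ∈ S_n. Let M be a left H-module and B : M × M → ℂ a bilinear form satisfying B(x_i·f, g) = B(f, x_i·g) and B(y_i·f, g) = B(f, y_i·g) for all 1 ≤ i ≤ n, and B(w·f, g) = B(f, sgn(w)·w^{-1}·g) for all w ∈ S_n and all f, g ∈ M. Let t ∈ M and m ∈ ℕ, and suppose B(t, h·t) = 0 for every l < m and every h ∈ W_l H. Then B(h·t, h'·t) = 0 whenever h ∈ W_l H, h' ∈ W_{l'} H and l + l' < m. -/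

import Mathlib

noncomputable section

/-- Generators of the rational Cherednik algebra of `S_n` at `t = 0`. -/
inductive CherGen (n : ℕ) : Type
  | x : Fin n → CherGen n
  | y : Fin n → CherGen n
  | T : Equiv.Perm (Fin n) → CherGen n

namespace Cherednik

variable (n : ℕ)

/-- The free algebra on the generators. -/
abbrev F := FreeAlgebra ℂ (CherGen n)

def fx (i : Fin n) : F n := FreeAlgebra.ι ℂ (CherGen.x i)
def fy (i : Fin n) : F n := FreeAlgebra.ι ℂ (CherGen.y i)
def fT (w : Equiv.Perm (Fin n)) : F n := FreeAlgebra.ι ℂ (CherGen.T w)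

/-- `s_{ij}`, the transposition interchanging `i` and `j`. -/
def fs (i j : Fin n) : F n := fT n (Equiv.swap i j)

/-- The defining relations of the rational Cherednik algebra at `t = 0`. -/
inductive Rel : F n → F n → Prop
  | T_mul (u v : Equiv.Perm (Fin n)) : Rel (fT n u * fT n v) (fT n (u * v))
  | T_one : Rel (fT n 1) 1
  | x_comm (i j : Fin n) : Rel (fx n i * fx n j) (fx n j * fx n i)
  | y_comm (i j : Fin n) : Rel (fy n i * fy n j) (fy n j * fy n i)
  | w_x (w : Equiv.Perm (Fin n)) (i : Fin n) :
      Rel (fT n w * fx n i) (fx n (w i) * fT n w)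
  | w_y (w : Equiv.Perm (Fin n)) (i : Fin n) :
      Rel (fT n w * fy n i) (fy n (w i) * fT n w)
  | yx_same (i : Fin n) :
      Rel (fy n i * fx n i)
        (fx n i * fy n i - ∑ j ∈ Finset.univ.filter (fun j => j ≠ i), fs n i j)
  | yx_ne (i j : Fin n) (h : i ≠ j) :
      Rel (fy n i * fx n j) (fx n j * fy n i + fs n i j)

/-- The rational Cherednik algebra `H` of `S_n` at `t = 0`. -/
abbrev H := RingQuot (Rel n)

def hx (i : Fin n) : H n := RingQuot.mkAlgHom ℂ (Rel n) (fx n i)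
def hy (i : Fin n) : H n := RingQuot.mkAlgHom ℂ (Rel n) (fy n i)
def hT (w : Equiv.Perm (Fin n)) : H n := RingQuot.mkAlgHom ℂ (Rel n) (fT n w)
def hs (i j : Fin n) : H n := hT n (Equiv.swap i j)

end Cherednik

namespace Cherednik

/-- The filtration `W_l H`: the ℂ-linear span of products
`x_{a_1}⋯x_{a_p} · y_{b_1}⋯y_{b_q} · w` with `p + q ≤ l` and `w ∈ S_n`. -/
def WH (n l : ℕ) : Submodule ℂ (H n) :=
  Submodule.span ℂ { h : H n |
    ∃ p q : ℕ, p + q ≤ l ∧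
      ∃ (a : Fin p → Fin n) (b : Fin q → Fin n) (w : Equiv.Perm (Fin n)),
        h = (List.ofFn fun r => hx n (a r)).prod *
            (List.ofFn fun s => hy n (b s)).prod * hT n w }

end Cherednik

/-! Every `h ∈ W_l H` has an adjoint `h* ∈ W_l H` for `B`: the adjoint of `x_a y_b w` is
`sgn(w) w⁻¹ y_b' x_a'` with the index lists reversed. The filtration is multiplicative,
`W_l H · W_{l'} H ⊆ W_{l+l'} H`, because moving a `y_i` past an `x_j` only produces commutators in
`ℂ[S_n]`, which preserve each `W_l H`. Hence `B(h t, h' t) = B(t, h* h' t) = 0` as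
`h* h' ∈ W_{l+l'} H`. -/

theorem SemiconjBy.list_prod_map {M ι : Type*} [Monoid M] {a : M} {g : ι → M} {σ : ι → ι}
    (h : ∀ i, SemiconjBy a (g i) (g (σ i))) (L : List ι) :
    SemiconjBy a (L.map g).prod ((L.map σ).map g).prod := by
  induction L with
  | nil => exact SemiconjBy.one_right a
  | cons i L ih => simpa only [List.map_cons, List.prod_cons] using (h i).mul_right ih

section Adjoint

variable {R A M N : Type*} [CommSemiring R] [Semiring A] [Algebra R A]
  [AddCommMonoid M] [Module R M] [Module A M] [IsScalarTower R A M]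
  [AddCommMonoid N] [Module R N] (B : M →ₗ[R] M →ₗ[R] N)

def adjointSubmodule (S : Submodule R A) : Submodule R A where
  carrier := {a | ∃ a' ∈ S, ∀ f g, B (a • f) g = B f (a' • g)}
  zero_mem' := ⟨0, S.zero_mem, by simp⟩
  add_mem' := by
    rintro a b ⟨a', ha', ha⟩ ⟨b', hb', hb⟩
    exact ⟨a' + b', S.add_mem ha' hb', fun f g => by simp [add_smul, ha, hb]⟩
  smul_mem' := by
    rintro c a ⟨a', ha', ha⟩
    exact ⟨c • a', S.smul_mem c ha', fun f g => by simp [smul_assoc, ha]⟩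

variable {B}

theorem adjointSubmodule_mono {S T : Submodule R A} (hST : S ≤ T) :
    adjointSubmodule B S ≤ adjointSubmodule B T := by
  rintro a ⟨a', ha', ha⟩
  exact ⟨a', hST ha', ha⟩

theorem mul_mem_adjointSubmodule {S T : Submodule R A} {a b : A}
    (ha : a ∈ adjointSubmodule B S) (hb : b ∈ adjointSubmodule B T) :
    a * b ∈ adjointSubmodule B (T * S) := by
  obtain ⟨a', ha', hadj⟩ := ha
  obtain ⟨b', hb', hbdj⟩ := hb
  exact ⟨b' * a', Submodule.mul_mem_mul hb' ha', fun f g => by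
    rw [mul_smul, hadj, hbdj, mul_smul]⟩

instance adjointSubmodule.gradedMonoid {ι : Type*} [AddCommMonoid ι] (S : ι → Submodule R A)
    [SetLike.GradedMonoid S] : SetLike.GradedMonoid fun i => adjointSubmodule B (S i) where
  one_mem := ⟨1, SetLike.one_mem_graded S, fun f g => by simp⟩
  mul_mem i j a b ha hb := by
    have hSS : S j * S i ≤ S (i + j) :=
      Submodule.mul_le.mpr fun _ hx _ hy => add_comm i j ▸ SetLike.mul_mem_graded hx hy
    exact adjointSubmodule_mono hSS (mul_mem_adjointSubmodule ha hb)

end Adjoint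

namespace Cherednik

variable {n : ℕ}

theorem hT_mul (u v : Equiv.Perm (Fin n)) : hT n u * hT n v = hT n (u * v) := by
  rw [hT, hT, hT, ← map_mul]
  exact RingQuot.mkAlgHom_rel ℂ (Rel.T_mul u v)

theorem hT_one : hT n 1 = 1 := by
  rw [hT]
  simpa using RingQuot.mkAlgHom_rel ℂ (Rel.T_one (n := n))

theorem hT_semiconj_hx (w : Equiv.Perm (Fin n)) (i : Fin n) :
    SemiconjBy (hT n w) (hx n i) (hx n (w i)) := by
  rw [SemiconjBy, hT, hx, hx, ← map_mul, ← map_mul]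
  exact RingQuot.mkAlgHom_rel ℂ (Rel.w_x w i)

theorem hT_semiconj_hy (w : Equiv.Perm (Fin n)) (i : Fin n) :
    SemiconjBy (hT n w) (hy n i) (hy n (w i)) := by
  rw [SemiconjBy, hT, hy, hy, ← map_mul, ← map_mul]
  exact RingQuot.mkAlgHom_rel ℂ (Rel.w_y w i)

theorem hy_mul_hx_self (i : Fin n) :
    hy n i * hx n i =
      hx n i * hy n i - ∑ j ∈ Finset.univ.filter (fun j => j ≠ i), hs n i j := by
  simpa [hy, hx, hs, hT, fs] using RingQuot.mkAlgHom_rel ℂ (Rel.yx_same (n := n) i)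

theorem hy_mul_hx_of_ne {i j : Fin n} (h : i ≠ j) :
    hy n i * hx n j = hx n j * hy n i + hs n i j := by
  simpa [hy, hx, hs, hT, fs] using RingQuot.mkAlgHom_rel ℂ (Rel.yx_ne (n := n) i j h)

theorem hy_mul_hx_sub_mem_span_hT (i j : Fin n) :
    hy n i * hx n j - hx n j * hy n i ∈ Submodule.span ℂ (Set.range (hT n)) := by
  have hs_mem (k : Fin n) : hs n i k ∈ Submodule.span ℂ (Set.range (hT n)) :=
    Submodule.subset_span ⟨_, rfl⟩
  by_cases hij : i = j
  · subst hij
    rw [hy_mul_hx_self, sub_sub_cancel_left]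
    exact neg_mem (Submodule.sum_mem _ fun k _ => hs_mem k)
  · rw [hy_mul_hx_of_ne hij, add_sub_cancel_left]
    exact hs_mem j

def monomial (L₁ L₂ : List (Fin n)) (w : Equiv.Perm (Fin n)) : H n :=
  (L₁.map (hx n)).prod * (L₂.map (hy n)).prod * hT n w

theorem monomial_mem_WH {L₁ L₂ : List (Fin n)} (w : Equiv.Perm (Fin n)) {l : ℕ}
    (h : L₁.length + L₂.length ≤ l) : monomial L₁ L₂ w ∈ WH n l := by
  refine Submodule.subset_span ⟨L₁.length, L₂.length, h, L₁.get, L₂.get, w, ?_⟩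
  simp only [monomial, List.ofFn_comp', List.ofFn_get]

theorem WH_le_of_monomial_mem {l : ℕ} {P : Submodule ℂ (H n)}
    (hP : ∀ L₁ L₂ w, L₁.length + L₂.length ≤ l → monomial L₁ L₂ w ∈ P) : WH n l ≤ P := by
  refine Submodule.span_le.mpr ?_
  rintro _ ⟨p, q, hpq, a, b, w, rfl⟩
  simpa [monomial, List.ofFn_comp'] using hP (List.ofFn a) (List.ofFn b) w (by simpa using hpq)

theorem WH_mono {l l' : ℕ} (h : l ≤ l') : WH n l ≤ WH n l' :=
  WH_le_of_monomial_mem fun _ _ w hl => monomial_mem_WH w (hl.trans h)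

theorem hT_mul_monomial (w : Equiv.Perm (Fin n)) (L₁ L₂ : List (Fin n))
    (v : Equiv.Perm (Fin n)) :
    hT n w * monomial L₁ L₂ v = monomial (L₁.map w) (L₂.map w) (w * v) := by
  rw [monomial, monomial, ← mul_assoc, ← mul_assoc,
    (SemiconjBy.list_prod_map (hT_semiconj_hx w) L₁).eq, mul_assoc _ (hT n w),
    (SemiconjBy.list_prod_map (hT_semiconj_hy w) L₂).eq, ← mul_assoc, mul_assoc _ (hT n w),
    hT_mul]

theorem hT_mem_WH (w : Equiv.Perm (Fin n)) : hT n w ∈ WH n 0 := by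
  simpa [monomial] using monomial_mem_WH (L₁ := []) (L₂ := []) w le_rfl

theorem hT_mul_mem (w : Equiv.Perm (Fin n)) {l : ℕ} {h : H n} (hh : h ∈ WH n l) :
    hT n w * h ∈ WH n l := by
  refine WH_le_of_monomial_mem (P := (WH n l).comap (LinearMap.mulLeft ℂ (hT n w)))
    (fun L₁ L₂ v hl => ?_) hh
  simpa [hT_mul_monomial] using monomial_mem_WH (w * v) (by simpa using hl)

theorem mul_mem_of_mem_span_hT {c : H n} (hc : c ∈ Submodule.span ℂ (Set.range (hT n)))
    {l : ℕ} {h : H n} (hh : h ∈ WH n l) : c * h ∈ WH n l := by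
  induction hc using Submodule.span_induction with
  | mem _ hc => obtain ⟨w, rfl⟩ := hc; exact hT_mul_mem w hh
  | zero => simp
  | add _ _ _ _ ih₁ ih₂ => rw [add_mul]; exact add_mem ih₁ ih₂
  | smul a _ _ ih => rw [smul_mul_assoc]; exact Submodule.smul_mem _ a ih

theorem hx_mul_mem (i : Fin n) {l : ℕ} {h : H n} (hh : h ∈ WH n l) :
    hx n i * h ∈ WH n (l + 1) := by
  refine WH_le_of_monomial_mem (P := (WH n (l + 1)).comap (LinearMap.mulLeft ℂ (hx n i)))
    (fun L₁ L₂ w hl => ?_) hh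
  have : hx n i * monomial L₁ L₂ w = monomial (i :: L₁) L₂ w := by
    simp only [monomial, List.map_cons, List.prod_cons, mul_assoc]
  simpa [this] using monomial_mem_WH (L₁ := i :: L₁) w (by simp only [List.length_cons]; omega)

theorem hy_mul_monomial_mem (i : Fin n) (L₁ L₂ : List (Fin n)) (w : Equiv.Perm (Fin n)) :
    hy n i * monomial L₁ L₂ w ∈ WH n (L₁.length + L₂.length + 1) := by
  induction L₁ with
  | nil =>
    have : hy n i * monomial [] L₂ w = monomial [] (i :: L₂) w := by
      simp only [monomial, List.map_nil, List.prod_nil, one_mul, List.map_cons,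
        List.prod_cons, mul_assoc]
    rw [this]
    exact monomial_mem_WH w (by simp)
  | cons j L₁ ih =>
    set r := monomial L₁ L₂ w
    have hr : monomial (j :: L₁) L₂ w = hx n j * r := by
      simp only [r, monomial, List.map_cons, List.prod_cons, mul_assoc]
    have hswap : hy n i * (hx n j * r) =
        hx n j * (hy n i * r) + (hy n i * hx n j - hx n j * hy n i) * r := by
      simp only [sub_mul, mul_assoc]
      abel
    have hlen : (j :: L₁).length + L₂.length + 1 = L₁.length + L₂.length + 1 + 1 := by
      simp only [List.length_cons]
      omega
    rw [hr, hswap, hlen]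
    exact add_mem (hx_mul_mem j ih) (WH_mono (by omega) (mul_mem_of_mem_span_hT
      (hy_mul_hx_sub_mem_span_hT i j) (monomial_mem_WH w le_rfl)))

theorem hy_mul_mem (i : Fin n) {l : ℕ} {h : H n} (hh : h ∈ WH n l) :
    hy n i * h ∈ WH n (l + 1) :=
  WH_le_of_monomial_mem (P := (WH n (l + 1)).comap (LinearMap.mulLeft ℂ (hy n i)))
    (fun L₁ L₂ w hl => WH_mono (by omega) (hy_mul_monomial_mem i L₁ L₂ w)) hh

theorem prod_map_mul_mem {g : Fin n → H n}
    (hg : ∀ i {l : ℕ} {h : H n}, h ∈ WH n l → g i * h ∈ WH n (l + 1))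
    (L : List (Fin n)) {l : ℕ} {h : H n} (hh : h ∈ WH n l) :
    (L.map g).prod * h ∈ WH n (L.length + l) := by
  induction L with
  | nil => simpa using hh
  | cons i L ih =>
    rw [List.map_cons, List.prod_cons, mul_assoc, List.length_cons, add_right_comm]
    exact hg i ih

theorem mul_mem_WH {l l' : ℕ} {h h' : H n} (hh : h ∈ WH n l) (hh' : h' ∈ WH n l') :
    h * h' ∈ WH n (l + l') := by
  refine WH_le_of_monomial_mem (P := (WH n (l + l')).comap (LinearMap.mulRight ℂ h'))
    (fun L₁ L₂ w hl => ?_) hh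
  have hmem := prod_map_mul_mem (fun i _ _ => hx_mul_mem i) L₁
    (prod_map_mul_mem (fun i _ _ => hy_mul_mem i) L₂ (hT_mul_mem w hh'))
  simp only [Submodule.mem_comap, LinearMap.mulRight_apply, monomial, mul_assoc]
  exact WH_mono (by omega) hmem

instance WH.gradedMonoid : SetLike.GradedMonoid (WH n) where
  one_mem := hT_one (n := n) ▸ hT_mem_WH 1
  mul_mem _ _ _ _ := mul_mem_WH

theorem WH_le_adjointSubmodule {M : Type*} [AddCommMonoid M] [Module ℂ M] [Module (H n) M]
    [IsScalarTower ℂ (H n) M] {B : M →ₗ[ℂ] M →ₗ[ℂ] ℂ}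
    (hBx : ∀ (i : Fin n) (f g : M), B (hx n i • f) g = B f (hx n i • g))
    (hBy : ∀ (i : Fin n) (f g : M), B (hy n i • f) g = B f (hy n i • g))
    (hBT : ∀ (w : Equiv.Perm (Fin n)) (f g : M),
      B (hT n w • f) g = B f (((Equiv.Perm.sign w : ℤ) : ℂ) • hT n w⁻¹ • g))
    (l : ℕ) : WH n l ≤ adjointSubmodule B (WH n l) := by
  let W : ℕ → Submodule ℂ (H n) := fun l => adjointSubmodule B (WH n l)
  have hx_adj (i : Fin n) : hx n i ∈ W 1 :=
    ⟨hx n i, by simpa using hx_mul_mem i (SetLike.one_mem_graded (WH n)), hBx i⟩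
  have hy_adj (i : Fin n) : hy n i ∈ W 1 :=
    ⟨hy n i, by simpa using hy_mul_mem i (SetLike.one_mem_graded (WH n)), hBy i⟩
  have hT_adj (w : Equiv.Perm (Fin n)) : hT n w ∈ W 0 :=
    ⟨_, Submodule.smul_mem _ _ (hT_mem_WH w⁻¹), fun f g => by rw [hBT, smul_assoc]⟩
  refine WH_le_of_monomial_mem fun L₁ L₂ w hl => adjointSubmodule_mono (WH_mono hl) ?_
  have hxs := SetLike.list_prod_map_mem_graded (A := W) L₁ (fun _ => 1) _ fun i _ => hx_adj i
  have hys := SetLike.list_prod_map_mem_graded (A := W) L₂ (fun _ => 1) _ fun i _ => hy_adj i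
  have hmon := SetLike.mul_mem_graded (SetLike.mul_mem_graded hxs hys) (hT_adj w)
  simp only [List.map_const', List.sum_replicate, smul_eq_mul, mul_one, add_zero] at hmon
  exact hmon

end Cherednik

open Cherednik in
theorem statement12_general (n : ℕ)
    (M : Type*) [AddCommGroup M] [Module ℂ M] [Module (H n) M]
    [IsScalarTower ℂ (H n) M]
    (B : M →ₗ[ℂ] M →ₗ[ℂ] ℂ)
    (hBx : ∀ (i : Fin n) (f g : M), B (hx n i • f) g = B f (hx n i • g))
    (hBy : ∀ (i : Fin n) (f g : M), B (hy n i • f) g = B f (hy n i • g))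
    (hBT : ∀ (w : Equiv.Perm (Fin n)) (f g : M),
      B (hT n w • f) g = B f (((Equiv.Perm.sign w : ℤ) : ℂ) • hT n w⁻¹ • g))
    (t : M) (m : ℕ)
    (ht : ∀ l, l < m → ∀ h ∈ WH n l, B t (h • t) = 0) :
    ∀ l l', l + l' < m → ∀ h ∈ WH n l, ∀ h' ∈ WH n l', B (h • t) (h' • t) = 0 := by
  intro l l' hll' h hh h' hh'
  obtain ⟨k, hk, hadj⟩ := WH_le_adjointSubmodule hBx hBy hBT l hh
  rw [hadj, ← mul_smul]
  exact ht _ hll' _ (SetLike.mul_mem_graded hk hh')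

open Cherednik in
/-- If `B` is a bilinear form on an `H`-module `M` compatible with `x_i`, `y_i` and
`w ↦ sgn(w) w⁻¹`, and `B(t, W_l H · t) = 0` for all `l < m`, then
`B(W_l H · t, W_{l'} H · t) = 0` whenever `l + l' < m`. -/
theorem statement12 (n : ℕ) (hn : 0 < n)
    (M : Type*) [AddCommGroup M] [Module ℂ M] [Module (H n) M]
    [IsScalarTower ℂ (H n) M]
    (B : M →ₗ[ℂ] M →ₗ[ℂ] ℂ)
    (hBx : ∀ (i : Fin n) (f g : M), B (hx n i • f) g = B f (hx n i • g))
    (hBy : ∀ (i : Fin n) (f g : M), B (hy n i • f) g = B f (hy n i • g))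
    (hBT : ∀ (w : Equiv.Perm (Fin n)) (f g : M),
      B (hT n w • f) g = B f (((Equiv.Perm.sign w : ℤ) : ℂ) • hT n w⁻¹ • g))
    (t : M) (m : ℕ)
    (ht : ∀ l, l < m → ∀ h ∈ WH n l, B t (h • t) = 0) :
    ∀ l l', l + l' < m → ∀ h ∈ WH n l, ∀ h' ∈ WH n l', B (h • t) (h' • t) = 0 :=
  statement12_general n M B hBx hBy hBT t m ht
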